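/- arXiv:2604.21185 — 5 statements merged into one kernel-verified Lean document; each statement's English description precedes it below -/
import Mathlib

section
/- For every f ∈ H¹(ℝ) and every a > 0, 2‖f‖_{L^∞}² ≤ a‖f‖_{L²}² + (1/a)‖f'‖_{L²}². -/
/-!
Apply the fundamental theorem of calculus to `g = f²` on `(-∞, x]` and on `[x, ∞)`: both
`g` and `g' = 2 f f'` are integrable, so `g` vanishes at `±∞` and
`2 g(x) ≤ ∫ |g'| ≤ 2 ‖f‖₂ ‖f'‖₂` by Cauchy–Schwarz. Hence `2‖f‖_∞² ≤ 2 ‖f‖₂ ‖f'‖₂`, and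
`2 u v ≤ a u² + v² / a` finishes.
-/

open Real MeasureTheory Filter Set Topology

theorem two_mul_norm_le_integral_norm_of_hasDerivAt {E : Type*} [NormedAddCommGroup E]
    [NormedSpace ℝ E] [CompleteSpace E] {g g' : ℝ → E} (hg : ∀ x, HasDerivAt g (g' x) x)
    (hg' : Integrable g') (hbot : Tendsto g atBot (𝓝 0)) (htop : Tendsto g atTop (𝓝 0))
    (x : ℝ) : 2 * ‖g x‖ ≤ ∫ t, ‖g' t‖ := by
  have hleft : ∫ t in Iic x, g' t = g x := by
    simpa using integral_Iic_of_hasDerivAt_of_tendsto' (fun t _ => hg t) hg'.integrableOn hbot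
  have hright : ∫ t in Ioi x, g' t = -g x := by
    simpa using integral_Ioi_of_hasDerivAt_of_tendsto' (fun t _ => hg t) hg'.integrableOn htop
  calc 2 * ‖g x‖ = ‖∫ t in Iic x, g' t‖ + ‖∫ t in Ioi x, g' t‖ := by
        rw [hleft, hright, norm_neg, two_mul]
    _ ≤ (∫ t in Iic x, ‖g' t‖) + ∫ t in Ioi x, ‖g' t‖ :=
        add_le_add (norm_integral_le_integral_norm _) (norm_integral_le_integral_norm _)
    _ = ∫ t, ‖g' t‖ := by
        rw [← compl_Iic]; exact integral_add_compl measurableSet_Iic hg'.norm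

theorem integral_norm_mul_le_toReal_eLpNorm_two_mul {α 𝕜 : Type*} [MeasurableSpace α]
    {μ : Measure α} [NormedRing 𝕜] {f g : α → 𝕜} (hf : MemLp f 2 μ) (hg : MemLp g 2 μ) :
    ∫ x, ‖f x * g x‖ ∂μ ≤ (eLpNorm f 2 μ).toReal * (eLpNorm g 2 μ).toReal := by
  have holder : eLpNorm (fun x => f x * g x) 1 μ ≤ 1 * eLpNorm f 2 μ * eLpNorm g 2 μ :=
    eLpNorm_le_eLpNorm_mul_eLpNorm'_of_norm hf.1 hg.1 (fun a b => a * b) 1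
      (.of_forall fun x => by simpa using norm_mul_le (f x) (g x))
  have hfg : AEStronglyMeasurable (fun x => f x * g x) μ := hf.1.mul hg.1
  rw [← lpNorm_one_eq_integral_norm hfg, ← toReal_eLpNorm hfg, ← ENNReal.toReal_mul]
  exact ENNReal.toReal_mono (ENNReal.mul_ne_top hf.eLpNorm_ne_top hg.eLpNorm_ne_top)
    (by simpa using holder)

theorem toReal_eLpNorm_top_le_of_forall_norm_le {α F : Type*} [MeasurableSpace α]
    {μ : Measure α} [NormedAddCommGroup F] {f : α → F} {C : ℝ} (hC : 0 ≤ C)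
    (hfC : ∀ x, ‖f x‖ ≤ C) : (eLpNorm f ⊤ μ).toReal ≤ C :=
  ENNReal.toReal_le_of_le_ofReal hC (eLpNorm_le_of_ae_bound (.of_forall hfC) |>.trans (by simp))

theorem sq_le_toReal_eLpNorm_mul_toReal_eLpNorm_deriv {f : ℝ → ℝ} (hf : Differentiable ℝ f)
    (hf2 : MemLp f 2 volume) (hf'2 : MemLp (deriv f) 2 volume) (x : ℝ) :
    f x ^ 2 ≤ (eLpNorm f 2 volume).toReal * (eLpNorm (deriv f) 2 volume).toReal := by
  have hd : ∀ t, HasDerivAt (fun y => f y ^ 2) (2 * (f t * deriv f t)) t := fun t => by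
    simpa [Pi.pow_def, mul_assoc] using (hf t).hasDerivAt.pow 2
  have hint : Integrable (fun t => 2 * (f t * deriv f t)) := (hf2.integrable_mul hf'2).const_mul 2
  have key := two_mul_norm_le_integral_norm_of_hasDerivAt hd hint
    (tendsto_zero_of_hasDerivAt_of_integrableOn_Iic (a := 0) (fun t _ => hd t) hint.integrableOn
      hf2.integrable_sq.integrableOn)
    (tendsto_zero_of_hasDerivAt_of_integrableOn_Ioi (a := 0) (fun t _ => hd t) hint.integrableOn
      hf2.integrable_sq.integrableOn) x
  have hnorm : ∫ t, ‖2 * (f t * deriv f t)‖ = 2 * ∫ t, ‖f t * deriv f t‖ := by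
    simp_rw [norm_mul (2 : ℝ), Real.norm_two, integral_const_mul]
  rw [hnorm, Real.norm_eq_abs, abs_pow, sq_abs] at key
  linarith [integral_norm_mul_le_toReal_eLpNorm_two_mul hf2 hf'2]

theorem two_mul_le_mul_sq_add_one_div_mul_sq {a : ℝ} (ha : 0 < a) (x y : ℝ) :
    2 * (x * y) ≤ a * x ^ 2 + 1 / a * y ^ 2 := by
  have hgap : a * x ^ 2 + 1 / a * y ^ 2 - 2 * (x * y) = (a * x - y) ^ 2 / a := by
    field_simp; ring
  linarith [div_nonneg (sq_nonneg (a * x - y)) ha.le]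

/-- Sharp one-dimensional Agmon/Gagliardo–Nirenberg inequality: for `f ∈ H¹(ℝ)`
and `a > 0`, `2‖f‖_∞² ≤ a‖f‖₂² + (1/a)‖f'‖₂²`. -/
theorem agmon_inequality (f : ℝ → ℝ) (hf : Differentiable ℝ f)
    (hf2 : MemLp f 2 (volume : Measure ℝ))
    (hf'2 : MemLp (deriv f) 2 (volume : Measure ℝ)) (a : ℝ) (ha : 0 < a) :
    2 * (eLpNorm f ⊤ (volume : Measure ℝ)).toReal ^ 2 ≤
      a * (eLpNorm f 2 (volume : Measure ℝ)).toReal ^ 2 +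
      (1 / a) * (eLpNorm (deriv f) 2 (volume : Measure ℝ)).toReal ^ 2 := by
  set N := (eLpNorm f 2 volume).toReal
  set N' := (eLpNorm (deriv f) 2 volume).toReal
  have hsup : (eLpNorm f ⊤ volume).toReal ≤ √(N * N') :=
    toReal_eLpNorm_top_le_of_forall_norm_le (Real.sqrt_nonneg _) fun x =>
      Real.abs_le_sqrt (sq_le_toReal_eLpNorm_mul_toReal_eLpNorm_deriv hf hf2 hf'2 x)
  calc 2 * (eLpNorm f ⊤ volume).toReal ^ 2 ≤ 2 * √(N * N') ^ 2 := by gcongr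
    _ = 2 * (N * N') := by rw [Real.sq_sqrt (by positivity)]
    _ ≤ a * N ^ 2 + 1 / a * N' ^ 2 := two_mul_le_mul_sq_add_one_div_mul_sq ha N N'
end

section
/- Let q < −2. Then there exists v ∈ H¹(ℝ) such that E(v) := ∫ℝ [ (1/2)|v'|² + (1 − cos v) ] dx + q(1 − cos v(0)) < 0. -/
/-!
For small `t`, `E(t φ) ≤ t² / 2 (‖φ'‖² + ‖φ‖² + q φ(0)²) + O(t⁴)`: inside the integral
`1 - cos y ≤ y² / 2`, and at the origin `1 - cos y ≥ y² / 2 - O(y⁴)`. So it suffices to find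
a differentiable `φ` with `‖φ'‖² + ‖φ‖² < -q φ(0)²`. The extremizer `e^{-|x|}` of the sharp
Agmon inequality has `‖φ'‖² + ‖φ‖² = 2 φ(0)² = 2` but is not differentiable at `0`; its
smoothing `exp (-√(x² + s²))` still satisfies `|φ'| ≤ φ ≤ e^{-|x|}`, hence
`‖φ'‖² + ‖φ‖² ≤ 2`, while `φ(0)² = e^{-2|s|} → 1` as `s → 0`. Since `-q > 2`, a small
`s ≠ 0` works.
-/

open Real MeasureTheory Filter Topology

theorem integral_exp_neg_mul_abs {b : ℝ} (hb : 0 < b) :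
    ∫ x : ℝ, exp (-b * |x|) = 2 / b := by
  rw [integral_comp_abs (f := fun x => exp (-b * x)), integral_exp_mul_Ioi (neg_lt_zero.2 hb)]
  field_simp
  simp

theorem integrable_exp_neg_mul_abs {b : ℝ} (hb : 0 < b) :
    Integrable fun x : ℝ => exp (-b * |x|) :=
  .of_integral_ne_zero <| by rw [integral_exp_neg_mul_abs hb]; positivity

theorem memLp_two_of_sq_le {α : Type*} [MeasurableSpace α] {μ : Measure α} {f g : α → ℝ}
    (hf : AEStronglyMeasurable f μ) (hg : Integrable g μ) (hfg : ∀ x, f x ^ 2 ≤ g x) :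
    MemLp f 2 μ :=
  (memLp_two_iff_integrable_sq hf).2 <|
    hg.mono' (hf.pow 2) <| .of_forall fun x => by
      simpa [abs_of_nonneg (sq_nonneg (f x))] using hfg x

theorem memLp_deriv_const_mul {φ : ℝ → ℝ} (hφ' : MemLp (deriv φ) 2) (t : ℝ) :
    MemLp (deriv fun x => t * φ x) 2 := by
  rw [deriv_const_mul_field']
  exact hφ'.const_mul t

noncomputable def energyDensity (v : ℝ → ℝ) (x : ℝ) : ℝ :=
  1 / 2 * deriv v x ^ 2 + (1 - cos (v x))

theorem energyDensity_nonneg (v : ℝ → ℝ) (x : ℝ) : 0 ≤ energyDensity v x := by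
  unfold energyDensity
  nlinarith [cos_le_one (v x), sq_nonneg (deriv v x)]

theorem energyDensity_le (v : ℝ → ℝ) (x : ℝ) :
    energyDensity v x ≤ 1 / 2 * (deriv v x ^ 2 + v x ^ 2) := by
  unfold energyDensity
  linarith [one_sub_sq_div_two_le_cos (x := v x)]

theorem integrable_energyDensity {v : ℝ → ℝ} (hv : MemLp v 2) (hv' : MemLp (deriv v) 2) :
    Integrable (energyDensity v) := by
  refine ((hv'.integrable_sq.add hv.integrable_sq).const_mul (1 / 2)).mono' ?_
    (.of_forall fun x => ?_)
  · exact ((hv'.1.pow 2).const_mul _).add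
      (aestronglyMeasurable_const.sub (continuous_cos.comp_aestronglyMeasurable hv.1))
  · rw [norm_of_nonneg (energyDensity_nonneg v x)]
    exact energyDensity_le v x

theorem integral_energyDensity_le {v : ℝ → ℝ} (hv : MemLp v 2) (hv' : MemLp (deriv v) 2) :
    ∫ x, energyDensity v x ≤ 1 / 2 * ∫ x, (deriv v x ^ 2 + v x ^ 2) := by
  rw [← integral_const_mul]
  exact integral_mono (integrable_energyDensity hv hv')
    ((hv'.integrable_sq.add hv.integrable_sq).const_mul _) (energyDensity_le v)

theorem exists_sq_mul_add_mul_one_sub_cos_neg {A q c : ℝ} (hq : q ≤ 0) (h : A + q * c ^ 2 < 0) :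
    ∃ t : ℝ, t ^ 2 / 2 * A + q * (1 - cos (t * c)) < 0 := by
  have hsmall : ∀ᶠ t in 𝓝[≠] (0 : ℝ),
      t ≠ 0 ∧ |t * c| < 1 ∧ A + q * c ^ 2 - 5 / 48 * q * t ^ 2 * c ^ 4 < 0 := by
    refine eventually_mem_nhdsWithin.and (.filter_mono nhdsWithin_le_nhds (.and ?_ ?_))
    · exact (by fun_prop : Continuous fun t : ℝ => |t * c|).continuousAt.eventually_lt
        continuousAt_const (by simp)
    · exact (by fun_prop : Continuous fun t : ℝ => A + q * c ^ 2 - 5 / 48 * q * t ^ 2 * c ^ 4)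
        |>.continuousAt.eventually_lt continuousAt_const (by simpa using h)
  obtain ⟨t, ht, hc, hneg⟩ := hsmall.exists
  refine ⟨t, ?_⟩
  have hcos : (t * c) ^ 2 / 2 - (t * c) ^ 4 * (5 / 96) ≤ 1 - cos (t * c) := by
    have := (abs_le.1 (cos_bound hc.le)).2
    rw [pow_abs, abs_of_nonneg (by positivity)] at this
    linarith
  calc t ^ 2 / 2 * A + q * (1 - cos (t * c))
      ≤ t ^ 2 / 2 * A + q * ((t * c) ^ 2 / 2 - (t * c) ^ 4 * (5 / 96)) := by
        gcongr _ + ?_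
        exact mul_le_mul_of_nonpos_left hcos hq
    _ = t ^ 2 / 2 * (A + q * c ^ 2 - 5 / 48 * q * t ^ 2 * c ^ 4) := by ring
    _ < 0 := mul_neg_of_pos_of_neg (by positivity) hneg

theorem exists_energy_const_mul_neg {q : ℝ} {φ : ℝ → ℝ} (hφ : MemLp φ 2)
    (hφ' : MemLp (deriv φ) 2)
    (h : (∫ x, (deriv φ x ^ 2 + φ x ^ 2)) + q * φ 0 ^ 2 < 0) :
    ∃ t : ℝ, (∫ x, energyDensity (fun x => t * φ x) x) + q * (1 - cos (t * φ 0)) < 0 := by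
  have hq : q ≤ 0 := by
    have : 0 ≤ ∫ x, (deriv φ x ^ 2 + φ x ^ 2) :=
      integral_nonneg fun x => add_nonneg (sq_nonneg (deriv φ x)) (sq_nonneg (φ x))
    nlinarith [sq_nonneg (φ 0)]
  obtain ⟨t, ht⟩ := exists_sq_mul_add_mul_one_sub_cos_neg hq h
  refine ⟨t, lt_of_le_of_lt ?_ ht⟩
  gcongr ?_ + _
  calc ∫ x, energyDensity (fun x => t * φ x) x
      ≤ 1 / 2 * ∫ x, (deriv (fun x => t * φ x) x ^ 2 + (t * φ x) ^ 2) :=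
        integral_energyDensity_le (hφ.const_mul t) (memLp_deriv_const_mul hφ' t)
    _ = t ^ 2 / 2 * ∫ x, (deriv φ x ^ 2 + φ x ^ 2) := by
        simp_rw [deriv_const_mul_field', mul_pow, ← mul_add, integral_const_mul]
        ring

noncomputable def smoothAgmon (s x : ℝ) : ℝ := exp (-√(x ^ 2 + s ^ 2))

theorem hasDerivAt_smoothAgmon {s : ℝ} (hs : s ≠ 0) (x : ℝ) :
    HasDerivAt (smoothAgmon s) (-(x / √(x ^ 2 + s ^ 2)) * smoothAgmon s x) x := by
  have hpos : x ^ 2 + s ^ 2 ≠ 0 := by positivity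
  have hsqrt : HasDerivAt (fun y => √(y ^ 2 + s ^ 2)) (x / √(x ^ 2 + s ^ 2)) x := by
    convert ((hasDerivAt_pow 2 x).add_const (s ^ 2)).sqrt hpos using 1
    field_simp
    norm_num
    ring
  exact hsqrt.neg.exp.congr_deriv (mul_comm _ _)

theorem differentiable_smoothAgmon {s : ℝ} (hs : s ≠ 0) : Differentiable ℝ (smoothAgmon s) :=
  fun x => (hasDerivAt_smoothAgmon hs x).differentiableAt

theorem abs_le_sqrt_sq_add_sq (s x : ℝ) : |x| ≤ √(x ^ 2 + s ^ 2) :=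
  abs_le_sqrt (by nlinarith [sq_nonneg s])

theorem sq_smoothAgmon_le (s x : ℝ) : smoothAgmon s x ^ 2 ≤ exp (-2 * |x|) := by
  rw [smoothAgmon, sq, ← exp_add]
  exact exp_le_exp.2 (by linarith [abs_le_sqrt_sq_add_sq s x])

theorem sq_deriv_smoothAgmon_le {s : ℝ} (hs : s ≠ 0) (x : ℝ) :
    deriv (smoothAgmon s) x ^ 2 ≤ exp (-2 * |x|) := by
  have hratio : (x / √(x ^ 2 + s ^ 2)) ^ 2 ≤ 1 := by
    rw [div_pow, sq_sqrt (by positivity)]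
    exact div_le_one_of_le₀ (by nlinarith [sq_nonneg s]) (by positivity)
  rw [(hasDerivAt_smoothAgmon hs x).deriv, mul_pow, neg_sq]
  calc (x / √(x ^ 2 + s ^ 2)) ^ 2 * smoothAgmon s x ^ 2 ≤ 1 * smoothAgmon s x ^ 2 := by gcongr
    _ ≤ exp (-2 * |x|) := by rw [one_mul]; exact sq_smoothAgmon_le s x

theorem memLp_smoothAgmon (s : ℝ) : MemLp (smoothAgmon s) 2 := by
  have hcont : Continuous (smoothAgmon s) := by unfold smoothAgmon; fun_prop
  exact memLp_two_of_sq_le hcont.aestronglyMeasurable (integrable_exp_neg_mul_abs two_pos)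
    (sq_smoothAgmon_le s)

theorem memLp_deriv_smoothAgmon {s : ℝ} (hs : s ≠ 0) : MemLp (deriv (smoothAgmon s)) 2 :=
  memLp_two_of_sq_le (measurable_deriv _).aestronglyMeasurable
    (integrable_exp_neg_mul_abs two_pos) (sq_deriv_smoothAgmon_le hs)

theorem integral_sq_deriv_add_sq_smoothAgmon_le {s : ℝ} (hs : s ≠ 0) :
    ∫ x, (deriv (smoothAgmon s) x ^ 2 + smoothAgmon s x ^ 2) ≤ 2 := by
  have hexp := integrable_exp_neg_mul_abs two_pos
  calc ∫ x, (deriv (smoothAgmon s) x ^ 2 + smoothAgmon s x ^ 2)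
      ≤ ∫ x, (exp (-2 * |x|) + exp (-2 * |x|)) :=
        integral_mono
          ((memLp_deriv_smoothAgmon hs).integrable_sq.add (memLp_smoothAgmon s).integrable_sq)
          (hexp.add hexp) fun x =>
            add_le_add (sq_deriv_smoothAgmon_le hs x) (sq_smoothAgmon_le s x)
    _ = 2 := by rw [integral_add hexp hexp, integral_exp_neg_mul_abs two_pos]; norm_num

theorem smoothAgmon_zero (s : ℝ) : smoothAgmon s 0 = exp (-|s|) := by
  simp [smoothAgmon, sqrt_sq_eq_abs]

/-- For `q < -2` there exists `v ∈ H¹(ℝ)` with strictly negative δ-perturbed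
sine-Gordon static energy
`E(v) = ∫ (1/2)(v')² + (1 - cos v) dx + q (1 - cos (v 0)) < 0`. -/
theorem negative_energy_exists (q : ℝ) (hq : q < -2) :
    ∃ v : ℝ → ℝ, Differentiable ℝ v ∧
      MemLp v 2 (volume : Measure ℝ) ∧
      MemLp (deriv v) 2 (volume : Measure ℝ) ∧
      Integrable (fun x => (1 / 2) * (deriv v x) ^ 2 + (1 - Real.cos (v x)))
        (volume : Measure ℝ) ∧
      (∫ x : ℝ, ((1 / 2) * (deriv v x) ^ 2 + (1 - Real.cos (v x)))) +
        q * (1 - Real.cos (v 0)) < 0 := by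
  obtain ⟨s, hs0, hs⟩ : ∃ s : ℝ, s ≠ 0 ∧ 2 + q * exp (-|s|) ^ 2 < 0 := by
    have hnear : ∀ᶠ s in 𝓝 (0 : ℝ), 2 + q * exp (-|s|) ^ 2 < 0 :=
      (by fun_prop : Continuous fun s : ℝ => 2 + q * exp (-|s|) ^ 2).continuousAt.eventually_lt
        continuousAt_const (by simp; linarith)
    exact (eventually_mem_nhdsWithin.and (hnear.filter_mono nhdsWithin_le_nhds)).exists
      (f := 𝓝[≠] 0)
  have hφ := memLp_smoothAgmon s
  have hφ' := memLp_deriv_smoothAgmon hs0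
  obtain ⟨t, ht⟩ := exists_energy_const_mul_neg (q := q) hφ hφ' (by
    rw [smoothAgmon_zero]
    linarith [integral_sq_deriv_add_sq_smoothAgmon_le hs0])
  have hv := hφ.const_mul t
  have hv' := memLp_deriv_const_mul hφ' t
  exact ⟨fun x => t * smoothAgmon s x, (differentiable_smoothAgmon hs0).const_mul t, hv, hv',
    integrable_energyDensity hv hv', ht⟩
end

section
/- Let −2 < q < 0. Then for every v ∈ H¹(ℝ), E(v) := ∫ℝ [ (1/2)|v'|² + (1 − cos v) ] dx + q(1 − cos v(0)) ≥ 0, i.e. the infimum of the energy over H¹(ℝ) is 0, attained at v = 0. -/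
/-!
Bogomolny's trick. With `W t = 4 (1 - cos (t/2))` one has `W'(t)² = 2 (1 - cos t)`, so the
energy density `v'²/2 + (1 - cos v)` dominates `|(W ∘ v)'|` pointwise. Since `W ∘ v` vanishes
at `±∞`, integrating `(W ∘ v)'` over each half-line gives
`∫ (v'²/2 + 1 - cos v) ≥ 2 W (v 0)`, and `2 W (v 0) ≥ 2 (1 - cos (v 0)) ≥ -q (1 - cos (v 0))`
for `q > -2`.
-/

open Real MeasureTheory Set Filter

theorem two_mul_abs_le_integral_abs_deriv {F F' : ℝ → ℝ}
    (hderiv : ∀ x, HasDerivAt F (F' x) x) (hF : Integrable F) (hF' : Integrable F') (a : ℝ) :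
    2 * |F a| ≤ ∫ x, |F' x| := by
  have hIic : ∫ x in Iic a, F' x = F a := by
    have hlim := tendsto_zero_of_hasDerivAt_of_integrableOn_Iic (a := a) (fun x _ => hderiv x)
      hF'.integrableOn hF.integrableOn
    simpa using integral_Iic_of_hasDerivAt_of_tendsto' (fun x _ => hderiv x) hF'.integrableOn hlim
  have hIoi : ∫ x in Ioi a, F' x = -F a := by
    have hlim := tendsto_zero_of_hasDerivAt_of_integrableOn_Ioi (a := a) (fun x _ => hderiv x)
      hF'.integrableOn hF.integrableOn
    simpa using integral_Ioi_of_hasDerivAt_of_tendsto' (fun x _ => hderiv x) hF'.integrableOn hlim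
  have left : |F a| ≤ ∫ x in Iic a, |F' x| := hIic ▸ abs_integral_le_integral_abs
  have right : |F a| ≤ ∫ x in Ioi a, |F' x| := by
    rw [← abs_neg, ← hIoi]
    exact abs_integral_le_integral_abs
  rw [← intervalIntegral.integral_Iic_add_Ioi hF'.abs.integrableOn hF'.abs.integrableOn]
  linarith

noncomputable def sineGordonSuperpotential (t : ℝ) : ℝ := 4 * (1 - cos (t / 2))

theorem hasDerivAt_sineGordonSuperpotential (t : ℝ) :
    HasDerivAt sineGordonSuperpotential (2 * sin (t / 2)) t := by
  have h := (((hasDerivAt_id' t).div_const 2).cos.const_sub 1).const_mul (4 : ℝ)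
  exact h.congr_deriv (by ring)

theorem sineGordonSuperpotential_nonneg (t : ℝ) : 0 ≤ sineGordonSuperpotential t := by
  unfold sineGordonSuperpotential
  linarith [cos_le_one (t / 2)]

theorem sineGordonSuperpotential_le_sq_div_two (t : ℝ) :
    sineGordonSuperpotential t ≤ t ^ 2 / 2 := by
  unfold sineGordonSuperpotential
  linarith [one_sub_sq_div_two_le_cos (x := t / 2)]

theorem one_sub_cos_eq_two_mul_sin_half_sq (t : ℝ) : 1 - cos t = 2 * sin (t / 2) ^ 2 := by
  have h := cos_two_mul' (t / 2)
  rw [mul_div_cancel₀ t two_ne_zero] at h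
  linarith [cos_sq_add_sin_sq (t / 2)]

theorem one_sub_cos_le_sineGordonSuperpotential (t : ℝ) :
    1 - cos t ≤ sineGordonSuperpotential t := by
  rw [one_sub_cos_eq_two_mul_sin_half_sq, sineGordonSuperpotential]
  nlinarith [sin_sq_add_cos_sq (t / 2), sq_nonneg (1 - cos (t / 2))]

theorem abs_two_mul_sin_half_mul_le (t s : ℝ) :
    |2 * sin (t / 2) * s| ≤ 1 / 2 * s ^ 2 + (1 - cos t) := by
  rw [one_sub_cos_eq_two_mul_sin_half_sq, abs_le]
  constructor <;> nlinarith [sq_nonneg (s + 2 * sin (t / 2)), sq_nonneg (s - 2 * sin (t / 2))]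

theorem energy_nonneg_general (q : ℝ) (hq1 : -2 < q) (v : ℝ → ℝ)
    (hv : Differentiable ℝ v)
    (hv2 : MemLp v 2 (volume : Measure ℝ))
    (hint : Integrable (fun x => (1 / 2) * (deriv v x) ^ 2 + (1 - Real.cos (v x)))
      (volume : Measure ℝ)) :
    0 ≤ (∫ x : ℝ, ((1 / 2) * (deriv v x) ^ 2 + (1 - Real.cos (v x)))) +
      q * (1 - Real.cos (v 0)) := by
  set W := sineGordonSuperpotential
  have hderiv : ∀ x, HasDerivAt (fun x => W (v x)) (2 * sin (v x / 2) * deriv v x) x :=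
    fun x => (hasDerivAt_sineGordonSuperpotential (v x)).comp x (hv x).hasDerivAt
  have hW_cont : Continuous fun x => W (v x) :=
    continuous_iff_continuousAt.2 fun x => (hderiv x).continuousAt
  have hW_int : Integrable fun x => W (v x) :=
    (hv2.integrable_sq.div_const 2).mono' hW_cont.aestronglyMeasurable <| ae_of_all _ fun x => by
      rw [norm_of_nonneg (sineGordonSuperpotential_nonneg _)]
      exact sineGordonSuperpotential_le_sq_div_two _
  have hW'_int : Integrable fun x => 2 * sin (v x / 2) * deriv v x :=
    have hmeas : AEStronglyMeasurable (fun x => 2 * sin (v x / 2) * deriv v x) :=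
      (continuous_const.mul (continuous_sin.comp (hv.continuous.div_const 2))
        ).aestronglyMeasurable.mul (aestronglyMeasurable_deriv v _)
    hint.mono' hmeas <| ae_of_all _ fun x => abs_two_mul_sin_half_mul_le _ _
  have hbound : 2 * W (v 0) ≤ ∫ x, (1 / 2) * (deriv v x) ^ 2 + (1 - Real.cos (v x)) :=
    calc 2 * W (v 0) ≤ 2 * |W (v 0)| := by gcongr; exact le_abs_self _
      _ ≤ ∫ x, |2 * sin (v x / 2) * deriv v x| :=
        two_mul_abs_le_integral_abs_deriv hderiv hW_int hW'_int 0
      _ ≤ _ := integral_mono hW'_int.abs hint fun x => abs_two_mul_sin_half_mul_le _ _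
  nlinarith [one_sub_cos_le_sineGordonSuperpotential (v 0),
    mul_nonneg (by linarith : (0 : ℝ) ≤ 2 + q) (sub_nonneg.2 (cos_le_one (v 0)))]

/-- For `-2 < q < 0` the δ-perturbed sine-Gordon static energy is nonnegative
on `H¹(ℝ)`: `E(v) = ∫ (1/2)(v')² + (1 - cos v) dx + q (1 - cos (v 0)) ≥ 0`,
so its infimum is `0`, attained at `v = 0`. -/
theorem energy_nonneg (q : ℝ) (hq1 : -2 < q) (hq2 : q < 0) (v : ℝ → ℝ)
    (hv : Differentiable ℝ v)
    (hv2 : MemLp v 2 (volume : Measure ℝ))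
    (hv'2 : MemLp (deriv v) 2 (volume : Measure ℝ))
    (hint : Integrable (fun x => (1 / 2) * (deriv v x) ^ 2 + (1 - Real.cos (v x)))
      (volume : Measure ℝ)) :
    0 ≤ (∫ x : ℝ, ((1 / 2) * (deriv v x) ^ 2 + (1 - Real.cos (v x)))) +
      q * (1 - Real.cos (v 0)) :=
  energy_nonneg_general q hq1 v hv hv2 hint
end

section
/- Let K(x) = 4·arctan(e^x) and q > 0. With v = K' (so v(x) = 2/cosh x), the quadratic form Q_K(v,v) := ∫ℝ [ (v')² + cos(K)·v² ] dx + q·cos(K(0))·v(0)² satisfies Q_K(v,v) = q·cos(K(0))·v(0)² = −4q < 0. -/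
/-!
Since `K'' = sin K`, the translation mode `v = K' = 2 sech` solves the Jacobi equation
`v'' = cos K · v`, so the integrand `(v')² + cos K · v²` is the exact derivative `(v v')'`.
Both it and `v v'` are `O(sech² x)`, hence integrable, so the integral vanishes and only the
point term `q cos (K 0) v(0)² = q · cos π · 2² = -4q` survives.
-/

open Real MeasureTheory

theorem integral_deriv_sq_add_mul_sq_eq_zero {v v' c : ℝ → ℝ}
    (hv : ∀ x, HasDerivAt v (v' x) x) (hv' : ∀ x, HasDerivAt v' (c x * v x) x)
    (hint : Integrable fun x => v' x ^ 2 + c x * v x ^ 2)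
    (hvv' : Integrable fun x => v x * v' x) :
    ∫ x, v' x ^ 2 + c x * v x ^ 2 = 0 :=
  integral_eq_zero_of_hasDerivAt_of_integrable
    (fun x => ((hv x).mul (hv' x)).congr_deriv (by ring)) hint hvv'

theorem sin_two_mul_arctan (t : ℝ) : sin (2 * arctan t) = 2 * t / (1 + t ^ 2) := by
  have hsqrt : √(1 + t ^ 2) ^ 2 = 1 + t ^ 2 := sq_sqrt (by positivity)
  rw [sin_two_mul, sin_arctan, cos_arctan]
  field_simp
  rw [hsqrt]

theorem sin_two_mul_arctan_exp (x : ℝ) : sin (2 * arctan (exp x)) = (cosh x)⁻¹ := by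
  rw [sin_two_mul_arctan, cosh_eq, exp_neg]
  field_simp
  ring

theorem cos_four_mul_arctan_exp (x : ℝ) : cos (4 * arctan (exp x)) = 1 - 2 / cosh x ^ 2 := by
  rw [show 4 * arctan (exp x) = 2 * (2 * arctan (exp x)) by ring, cos_two_mul_eq_one_sub,
    sin_two_mul_arctan_exp]
  ring

theorem hasDerivAt_two_div_cosh (x : ℝ) :
    HasDerivAt (fun y => 2 / cosh y) (-2 * sinh x / cosh x ^ 2) x := by
  refine ((hasDerivAt_const x (2 : ℝ)).div (hasDerivAt_cosh x) (cosh_pos x).ne').congr_deriv ?_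
  simp only [zero_mul, zero_sub, neg_mul, neg_div]

theorem hasDerivAt_neg_two_mul_sinh_div_cosh_sq (x : ℝ) :
    HasDerivAt (fun y => -2 * sinh y / cosh y ^ 2)
      (cos (4 * arctan (exp x)) * (2 / cosh x)) x := by
  refine (((hasDerivAt_sinh x).const_mul (-2)).div ((hasDerivAt_cosh x).pow 2)
    (pow_pos (cosh_pos x) 2).ne').congr_deriv ?_
  rw [cos_four_mul_arctan_exp, Pi.pow_apply]
  have := cosh_pos x
  field_simp
  rw [sinh_sq]
  ring

theorem integrable_inv_cosh_sq : Integrable fun x => (cosh x ^ 2)⁻¹ := by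
  refine integrable_inv_one_add_sq.mono' (by fun_prop) (.of_forall fun x => ?_)
  rw [norm_inv, norm_pow, Real.norm_eq_abs, sq_abs]
  have hsinh : x ^ 2 ≤ sinh x ^ 2 := by
    rcases le_total 0 x with hx | hx
    · exact pow_le_pow_left₀ hx (self_le_sinh_iff.2 hx) 2
    · nlinarith [sinh_le_self_iff.2 hx]
  gcongr
  rw [cosh_sq]
  linarith

theorem integrable_of_abs_le_mul_inv_cosh_sq {f : ℝ → ℝ} (hf : Continuous f) (C : ℝ)
    (h : ∀ x, |f x| ≤ C * (cosh x ^ 2)⁻¹) : Integrable f :=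
  (integrable_inv_cosh_sq.const_mul C).mono' hf.aestronglyMeasurable (.of_forall h)

theorem integrable_two_div_cosh_mul_deriv :
    Integrable fun x => 2 / cosh x * (-2 * sinh x / cosh x ^ 2) := by
  refine integrable_of_abs_le_mul_inv_cosh_sq (by fun_prop (disch := intro; positivity)) 4
    fun x => ?_
  have hc := cosh_pos x
  have htanh : |tanh x| ≤ 1 := abs_le.2 ⟨(neg_one_lt_tanh x).le, (tanh_lt_one x).le⟩
  have hform : 2 / cosh x * (-2 * sinh x / cosh x ^ 2) = -4 * tanh x * (cosh x ^ 2)⁻¹ := by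
    rw [tanh_eq_sinh_div_cosh]
    field_simp
    ring
  rw [hform, abs_mul, abs_mul, abs_of_pos (by positivity : (0 : ℝ) < (cosh x ^ 2)⁻¹)]
  norm_num
  gcongr
  exact mul_le_of_le_one_right (by norm_num) htanh

theorem integrable_kink_quadratic_form_integrand :
    Integrable fun x => (-2 * sinh x / cosh x ^ 2) ^ 2 +
      cos (4 * arctan (exp x)) * (2 / cosh x) ^ 2 := by
  refine integrable_of_abs_le_mul_inv_cosh_sq (by fun_prop (disch := intro; positivity)) 20
    fun x => ?_
  set s := (cosh x ^ 2)⁻¹ with hs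
  have hs0 : 0 < s := by positivity
  have hs1 : s ≤ 1 := inv_le_one_of_one_le₀ (one_le_pow₀ (one_le_cosh x))
  have hform : (-2 * sinh x / cosh x ^ 2) ^ 2 + cos (4 * arctan (exp x)) * (2 / cosh x) ^ 2 =
      8 * s - 12 * s ^ 2 := by
    have := cosh_pos x
    rw [cos_four_mul_arctan_exp, hs]
    field_simp
    rw [sinh_sq]
    ring
  rw [hform, abs_le]
  constructor <;> nlinarith

/-- Negative direction of the linearized energy around the kink for `q > 0`:
with `K x = 4 arctan (exp x)` and `v = K'` (so `v x = 2 / cosh x`), the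
quadratic form `Q_K(v,v) = ∫ (v')² + cos(K) v² dx + q cos(K 0) (v 0)²`
equals `-4 q < 0`. -/
theorem negative_direction_kink (q : ℝ) (hq : 0 < q) :
    (∫ x : ℝ, ((deriv (fun y : ℝ => 2 / Real.cosh y) x) ^ 2 +
        Real.cos (4 * Real.arctan (Real.exp x)) * (2 / Real.cosh x) ^ 2)) +
      q * Real.cos (4 * Real.arctan (Real.exp 0)) * (2 / Real.cosh 0) ^ 2
      = -4 * q ∧ -4 * q < 0 := by
  have hderiv : deriv (fun y => 2 / cosh y) = fun x => -2 * sinh x / cosh x ^ 2 :=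
    funext fun x => (hasDerivAt_two_div_cosh x).deriv
  have hbulk : ∫ x, (deriv (fun y => 2 / cosh y) x) ^ 2 +
      cos (4 * arctan (exp x)) * (2 / cosh x) ^ 2 = 0 := by
    rw [hderiv]
    exact integral_deriv_sq_add_mul_sq_eq_zero hasDerivAt_two_div_cosh
      hasDerivAt_neg_two_mul_sinh_div_cosh_sq integrable_kink_quadratic_form_integrand
      integrable_two_div_cosh_mul_deriv
  have hK0 : cos (4 * arctan (exp 0)) = -1 := by
    rw [cos_four_mul_arctan_exp, cosh_zero]
    norm_num
  refine ⟨?_, by linarith⟩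
  rw [hbulk, hK0, cosh_zero]
  ring
end

section
/- Let u ∈ C¹(ℝ) with u' absolutely continuous on each of (−∞,0] and [0,∞), u'' = sin u on (−∞, −c) for some c > 0, u, sin u, u' square-integrable in the sense u' ∈ L²，sin(u/2) ∈ L². If there is an interval (a,b) ⊂ (−∞,−c) on which u' ≠ 0 and (1/2)(u')² = 2 sin²(u/2) − C on (a,b) for a constant C ≠ 0, then (u')² + sin²(u) is bounded below by a positive constant on (a,b). -/
open Real MeasureTheory Set

/-! With `s = sin² (θ/2) ∈ [0, 1]` the first integral reads `v² = 4 s - 2 C` and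
`sin² θ = 4 s (1 - s)`, so `v² + sin² θ = 8 s - 4 s² - 2 C` is a concave function of `s`.
For `C < 0` its minimum over `[0, 1]` is `-2 C`; for `C > 0` the constraint `v² ≥ 0` forces
`s ≥ C / 2`, and the minimum over `[C / 2, 1]` is `C (2 - C)`, positive because `v ≠ 0`
forces `C < 2`. -/

theorem sin_sq_eq_four_mul_sin_half_sq_mul (θ : ℝ) :
    sin θ ^ 2 = 4 * sin (θ / 2) ^ 2 * (1 - sin (θ / 2) ^ 2) := by
  have hsin : sin θ = 2 * sin (θ / 2) * cos (θ / 2) := by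
    rw [← sin_two_mul, mul_div_cancel₀ θ two_ne_zero]
  rw [hsin, ← cos_sq']
  ring

section FirstIntegral

variable {v θ C : ℝ}

theorem neg_two_mul_le_of_first_integral
    (hfi : (1 / 2) * v ^ 2 = 2 * sin (θ / 2) ^ 2 - C) :
    -2 * C ≤ v ^ 2 + sin θ ^ 2 := by
  rw [sin_sq_eq_four_mul_sin_half_sq_mul]
  nlinarith [sin_sq_le_one (θ / 2), sq_nonneg (sin (θ / 2))]

theorem lt_two_of_first_integral (hv : v ≠ 0)
    (hfi : (1 / 2) * v ^ 2 = 2 * sin (θ / 2) ^ 2 - C) : C < 2 := by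
  nlinarith [sin_sq_le_one (θ / 2), pow_pos (abs_pos.mpr hv) 2, sq_abs v]

theorem mul_two_sub_le_of_first_integral
    (hfi : (1 / 2) * v ^ 2 = 2 * sin (θ / 2) ^ 2 - C) :
    C * (2 - C) ≤ v ^ 2 + sin θ ^ 2 := by
  set s := sin (θ / 2) ^ 2
  have hs_le : s ≤ 1 := sin_sq_le_one _
  have hs_ge : C / 2 ≤ s := by nlinarith [sq_nonneg v]
  -- the difference is `4 (s - C/2) (2 - C/2 - s)`
  have hprod : 0 ≤ (s - C / 2) * (2 - C / 2 - s) :=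
    mul_nonneg (by linarith) (by linarith)
  rw [sin_sq_eq_four_mul_sin_half_sq_mul]
  nlinarith

end FirstIntegral

theorem first_integral_lower_bound_general (u : ℝ → ℝ) (a b C : ℝ)
    (hab : a < b)
    (hne : ∀ x ∈ Set.Ioo a b, deriv u x ≠ 0)
    (hfi : ∀ x ∈ Set.Ioo a b,
      (1 / 2) * (deriv u x) ^ 2 = 2 * Real.sin (u x / 2) ^ 2 - C)
    (hC : C ≠ 0) :
    ∃ ε : ℝ, 0 < ε ∧ ∀ x ∈ Set.Ioo a b, ε ≤ (deriv u x) ^ 2 + Real.sin (u x) ^ 2 := by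
  rcases hC.lt_or_gt with hCneg | hCpos
  · exact ⟨-2 * C, by linarith, fun x hx => neg_two_mul_le_of_first_integral (hfi x hx)⟩
  · obtain ⟨x₀, hx₀⟩ := exists_between hab
    have hC2 : C < 2 := lt_two_of_first_integral (hne x₀ hx₀) (hfi x₀ hx₀)
    exact ⟨C * (2 - C), mul_pos hCpos (by linarith),
      fun x hx => mul_two_sub_le_of_first_integral (hfi x hx)⟩

/-- First-integral dichotomy for the static sine-Gordon equation: if `u` is `C¹`
with `u'' = sin u` on `(-∞, -c)`, `u' ∈ L²` and `sin (u/2) ∈ L²`, and on an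
interval `(a,b) ⊆ (-∞,-c)` one has `u' ≠ 0` and the first integral
`(1/2)(u')² = 2 sin²(u/2) - C` with `C ≠ 0`, then `(u')² + sin² u` is bounded
below by a positive constant on `(a,b)`. -/
theorem first_integral_lower_bound (u : ℝ → ℝ) (c a b C : ℝ)
    (hc : 0 < c) (hab : a < b)
    (hu : ContDiff ℝ 1 u)
    (hu'' : ∀ x ∈ Set.Iio (-c), deriv (deriv u) x = Real.sin (u x))
    (hu'L2 : MemLp (deriv u) 2 (volume : Measure ℝ))
    (hsinL2 : MemLp (fun x => Real.sin (u x / 2)) 2 (volume : Measure ℝ))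
    (hsub : Set.Ioo a b ⊆ Set.Iio (-c))
    (hne : ∀ x ∈ Set.Ioo a b, deriv u x ≠ 0)
    (hfi : ∀ x ∈ Set.Ioo a b,
      (1 / 2) * (deriv u x) ^ 2 = 2 * Real.sin (u x / 2) ^ 2 - C)
    (hC : C ≠ 0) :
    ∃ ε : ℝ, 0 < ε ∧ ∀ x ∈ Set.Ioo a b, ε ≤ (deriv u x) ^ 2 + Real.sin (u x) ^ 2 :=
  first_integral_lower_bound_general u a b C hab hne hfi hC
end
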